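/- arXiv:2106.09207 — 5 statements merged into one kernel-verified Lean document; each statement's English description precedes it below -/
import Mathlib

section
/- Let Σ be an n×n positive definite matrix and Σ̃ a symmetric matrix satisfying (1−ε)Σ ⪯ Σ̃ ⪯ (1+ε)Σ. Then for any v ∈ ℝⁿ and any subset A ⊆ [n], ‖Σ_{AA}^{−1/2}(Σ̃_A − Σ_A)v‖₂ ≤ ε·√(⟨v, Σ v⟩), where Σ_{AA} is the principal submatrix on rows and columns in A, and Σ_A (resp. Σ̃_A) is the |A|×n submatrix of rows in A. -/
/-! Put `E = Σ̃ - Σ`, so that `-εΣ ⪯ E ⪯ εΣ`. Polarization turns this into the Cauchy–Schwarz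
type bound `⟨x, E y⟩ ≤ ε ‖x‖_Σ ‖y‖_Σ`. Let `B` select the rows in `A`, so `Σ_AA = B Σ Bᵀ`, and let
`w = Σ_AA^{-1/2} B E v`. The vector `u = Bᵀ Σ_AA^{-1/2} w` has `‖u‖_Σ² = ‖w‖²` and
`⟨u, E v⟩ = ‖w‖²`, whence `‖w‖² ≤ ε ‖w‖ ‖v‖_Σ`. -/

open Matrix

section

open scoped ComplexOrder

noncomputable def Matrix.PosSemidef.sqrt {n 𝕜 : Type*} [Fintype n] [DecidableEq n] [RCLike 𝕜]
    {A : Matrix n n 𝕜} (hA : Matrix.PosSemidef A) : Matrix n n 𝕜 :=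
  hA.1.eigenvectorUnitary.1 * diagonal ((↑) ∘ (√·) ∘ hA.1.eigenvalues) *
  (star hA.1.eigenvectorUnitary : Matrix n n 𝕜)

end

section Sqrt

open scoped ComplexOrder

variable {n 𝕜 : Type*} [Fintype n] [DecidableEq n] [RCLike 𝕜] {A : Matrix n n 𝕜}

theorem Matrix.PosSemidef.sqrt_mul_self (hA : A.PosSemidef) : hA.sqrt * hA.sqrt = A := by
  set U := hA.1.eigenvectorUnitary
  set D : Matrix n n 𝕜 := diagonal ((↑) ∘ (√·) ∘ hA.1.eigenvalues)
  have hU : (star U : Matrix n n 𝕜) * U = 1 := Unitary.coe_star_mul_self U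
  have hD : D * D = diagonal (RCLike.ofReal ∘ hA.1.eigenvalues) := by
    rw [diagonal_mul_diagonal]
    congr 1
    funext i
    simp only [Function.comp_apply]
    rw [← RCLike.ofReal_mul, Real.mul_self_sqrt (hA.eigenvalues_nonneg i)]
  calc hA.sqrt * hA.sqrt
        = U * (D * ((star U : Matrix n n 𝕜) * U) * D) * (star U : Matrix n n 𝕜) := by
        simp only [Matrix.PosSemidef.sqrt, U, D, Matrix.mul_assoc]
    _ = A := by
      rw [hU, Matrix.mul_one, hD]
      conv_rhs => rw [hA.1.spectral_theorem, Unitary.conjStarAlgAut_apply]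

theorem Matrix.PosSemidef.sqrt_isHermitian (hA : A.PosSemidef) : hA.sqrt.IsHermitian := by
  have hd : star (((↑) ∘ (√·) ∘ hA.1.eigenvalues) : n → 𝕜) =
      ((↑) ∘ (√·) ∘ hA.1.eigenvalues) := by
    funext i
    simp
  simp only [Matrix.PosSemidef.sqrt, IsHermitian, conjTranspose_mul, Matrix.mul_assoc,
    star_eq_conjTranspose, conjTranspose_conjTranspose, diagonal_conjTranspose, hd]

end Sqrt

theorem Matrix.submatrix_id_eq_one_submatrix_mul {ι κ ι' R : Type*} [Fintype ι] [DecidableEq ι]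
    [NonAssocSemiring R] (e : κ → ι) (M : Matrix ι ι' R) :
    M.submatrix e id = (1 : Matrix ι ι R).submatrix e id * M := by
  simpa using (one_submatrix_mul e (Equiv.refl _) M).symm

theorem Matrix.one_submatrix_mul_mul_transpose {ι κ R : Type*} [Fintype ι] [DecidableEq ι]
    [NonAssocSemiring R] (e : κ → ι) (M : Matrix ι ι R) :
    (1 : Matrix ι ι R).submatrix e id * M * ((1 : Matrix ι ι R).submatrix e id)ᵀ
      = M.submatrix e e := by
  rw [← submatrix_id_eq_one_submatrix_mul, transpose_submatrix, transpose_one]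
  simpa using mul_submatrix_one (Equiv.refl ι) e (M.submatrix e id)

theorem Real.sqrt_le_of_le_mul_sqrt {a c : ℝ} (hc : 0 ≤ c) (h : a ≤ c * √a) : √a ≤ c := by
  rcases le_or_gt a 0 with ha | ha
  · rwa [Real.sqrt_eq_zero'.2 ha]
  · nlinarith [Real.mul_self_sqrt ha.le, Real.sqrt_pos.2 ha]

section QuadraticForms

variable {ι : Type*} [Fintype ι]

theorem Matrix.IsHermitian.dotProduct_mulVec_comm {E : Matrix ι ι ℝ} (hE : E.IsHermitian)
    (x y : ι → ℝ) : x ⬝ᵥ E *ᵥ y = y ⬝ᵥ E *ᵥ x := by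
  rw [dotProduct_mulVec, ← mulVec_transpose, ← conjTranspose_eq_transpose_of_trivial, hE.eq,
    dotProduct_comm]

variable {Sig E : Matrix ι ι ℝ} {ε : ℝ}

theorem dotProduct_mulVec_le_of_posSemidef_sub (h : (ε • Sig - E).PosSemidef) (z : ι → ℝ) :
    z ⬝ᵥ E *ᵥ z ≤ ε * (z ⬝ᵥ Sig *ᵥ z) := by
  have := h.dotProduct_mulVec_nonneg z
  simp only [sub_mulVec, dotProduct_sub, smul_mulVec, dotProduct_smul, smul_eq_mul,
    star_trivial] at this
  linarith

theorem neg_le_dotProduct_mulVec_of_posSemidef_add (h : (ε • Sig + E).PosSemidef) (z : ι → ℝ) :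
    -(ε * (z ⬝ᵥ Sig *ᵥ z)) ≤ z ⬝ᵥ E *ᵥ z := by
  have := h.dotProduct_mulVec_nonneg z
  simp only [add_mulVec, dotProduct_add, smul_mulVec, dotProduct_smul, smul_eq_mul,
    star_trivial] at this
  linarith

theorem two_mul_dotProduct_mulVec_le (hSig : Sig.IsHermitian) (hle : (ε • Sig - E).PosSemidef)
    (hge : (ε • Sig + E).PosSemidef) (x y : ι → ℝ) :
    2 * (x ⬝ᵥ E *ᵥ y) ≤ ε * (x ⬝ᵥ Sig *ᵥ x + y ⬝ᵥ Sig *ᵥ y) := by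
  have hE : E.IsHermitian := by simpa using (hSig.smul (k := ε) rfl).sub hle.1
  have hsum := dotProduct_mulVec_le_of_posSemidef_sub hle (x + y)
  have hdiff := neg_le_dotProduct_mulVec_of_posSemidef_add hge (x - y)
  have hxy := hE.dotProduct_mulVec_comm x y
  have hxy' := hSig.dotProduct_mulVec_comm x y
  simp only [mulVec_add, mulVec_sub, dotProduct_add, dotProduct_sub, add_dotProduct,
    sub_dotProduct] at hsum hdiff
  linarith

theorem dotProduct_mulVec_le_mul_sqrt_mul_sqrt (hSig : Sig.PosDef)
    (hle : (ε • Sig - E).PosSemidef) (hge : (ε • Sig + E).PosSemidef) (x y : ι → ℝ) :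
    x ⬝ᵥ E *ᵥ y ≤ ε * √(x ⬝ᵥ Sig *ᵥ x) * √(y ⬝ᵥ Sig *ᵥ y) := by
  rcases eq_or_ne x 0 with rfl | hx
  · simp
  rcases eq_or_ne y 0 with rfl | hy
  · simp
  have hxx : 0 < x ⬝ᵥ Sig *ᵥ x := by simpa using hSig.dotProduct_mulVec_pos hx
  have hyy : 0 < y ⬝ᵥ Sig *ᵥ y := by simpa using hSig.dotProduct_mulVec_pos hy
  set a := √(x ⬝ᵥ Sig *ᵥ x)
  set b := √(y ⬝ᵥ Sig *ᵥ y)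
  have ha : 0 < a := Real.sqrt_pos.2 hxx
  have hb : 0 < b := Real.sqrt_pos.2 hyy
  -- polarization applied to `b • x` and `a • y`, which have the same `Sig`-norm `a * b`
  have key := two_mul_dotProduct_mulVec_le hSig.1 hle hge (b • x) (a • y)
  simp only [mulVec_smul, dotProduct_smul, smul_dotProduct, smul_eq_mul] at key
  rw [← Real.sq_sqrt hxx.le, ← Real.sq_sqrt hyy.le] at key
  have hab : 0 < 2 * a * b := by positivity
  nlinarith

theorem mul_sqrt_nonneg_of_posSemidef (hSig : Sig.PosSemidef)
    (hle : (ε • Sig - E).PosSemidef) (hge : (ε • Sig + E).PosSemidef) (v : ι → ℝ) :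
    0 ≤ ε * √(v ⬝ᵥ Sig *ᵥ v) := by
  have hq : 0 ≤ v ⬝ᵥ Sig *ᵥ v := by simpa using hSig.dotProduct_mulVec_nonneg v
  have hεq : 0 ≤ √(v ⬝ᵥ Sig *ᵥ v) * (ε * √(v ⬝ᵥ Sig *ᵥ v)) := by
    rw [mul_left_comm, Real.mul_self_sqrt hq]
    linarith [dotProduct_mulVec_le_of_posSemidef_sub hle v,
      neg_le_dotProduct_mulVec_of_posSemidef_add hge v]
  rcases (Real.sqrt_nonneg (v ⬝ᵥ Sig *ᵥ v)).eq_or_lt with h | h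
  · rw [← h, mul_zero]
  · exact nonneg_of_mul_nonneg_right hεq h

theorem sqrt_dotProduct_inv_mulVec_le {κ : Type*} [Fintype κ] [DecidableEq κ]
    (hSig : Sig.PosDef) (hle : (ε • Sig - E).PosSemidef) (hge : (ε • Sig + E).PosSemidef)
    (B : Matrix κ ι ℝ) {S : Matrix κ κ ℝ} (hS : S.IsHermitian) (hSS : S * S = B * Sig * Bᵀ)
    (hdet : IsUnit S.det) (v : ι → ℝ) :
    √((S⁻¹ *ᵥ (B * E) *ᵥ v) ⬝ᵥ (S⁻¹ *ᵥ (B * E) *ᵥ v)) ≤ ε * √(v ⬝ᵥ Sig *ᵥ v) := by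
  set w := S⁻¹ *ᵥ (B * E) *ᵥ v
  set x := S⁻¹ *ᵥ w
  have hSx : S *ᵥ x = w := by rw [mulVec_mulVec, mul_nonsing_inv S hdet, one_mulVec]
  have hww : w ⬝ᵥ w = (Bᵀ *ᵥ x) ⬝ᵥ E *ᵥ v := by
    calc w ⬝ᵥ w = ((B * E) *ᵥ v) ⬝ᵥ x := hS.inv.dotProduct_mulVec_comm _ _
      _ = (Bᵀ *ᵥ x) ⬝ᵥ E *ᵥ v := by
        rw [dotProduct_comm, ← mulVec_mulVec, dotProduct_mulVec, ← mulVec_transpose]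
  have hSig_quad : (Bᵀ *ᵥ x) ⬝ᵥ Sig *ᵥ (Bᵀ *ᵥ x) = w ⬝ᵥ w := by
    calc (Bᵀ *ᵥ x) ⬝ᵥ Sig *ᵥ (Bᵀ *ᵥ x) = x ⬝ᵥ (S * S) *ᵥ x := by
          rw [hSS, ← mulVec_mulVec, ← mulVec_mulVec, dotProduct_mulVec x B, ← mulVec_transpose]
      _ = w ⬝ᵥ w := by
        rw [← mulVec_mulVec, hS.dotProduct_mulVec_comm, hSx]
  have hcs := dotProduct_mulVec_le_mul_sqrt_mul_sqrt hSig hle hge (Bᵀ *ᵥ x) v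
  rw [← hww, hSig_quad] at hcs
  exact Real.sqrt_le_of_le_mul_sqrt (mul_sqrt_nonneg_of_posSemidef hSig.posSemidef hle hge v)
    (by linarith)

end QuadraticForms

theorem stmt_1_general {n : ℕ} (Sig SigT : Matrix (Fin n) (Fin n) ℝ)
    (hSig : Sig.PosDef) (ε : ℝ)
    (hlow : (SigT - (1 - ε) • Sig).PosSemidef)
    (hhigh : ((1 + ε) • Sig - SigT).PosSemidef)
    (v : Fin n → ℝ) (A : Finset (Fin n)) :
    (fun d => Real.sqrt (d ⬝ᵥ d))
      ((((hSig.posSemidef.submatrix (Subtype.val : {i // i ∈ A} → Fin n)).sqrt)⁻¹).mulVec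
        (((SigT.submatrix (Subtype.val : {i // i ∈ A} → Fin n) id)
          - (Sig.submatrix (Subtype.val : {i // i ∈ A} → Fin n) id)).mulVec v))
      ≤ ε * Real.sqrt (v ⬝ᵥ Sig.mulVec v) := by
  set e : {i // i ∈ A} → Fin n := Subtype.val
  set B := (1 : Matrix (Fin n) (Fin n) ℝ).submatrix e id
  set S := (hSig.posSemidef.submatrix e).sqrt
  have hSS : S * S = B * Sig * Bᵀ := by
    rw [PosSemidef.sqrt_mul_self, one_submatrix_mul_mul_transpose]
  have hdet : IsUnit S.det := by
    refine isUnit_of_mul_isUnit_left (y := S.det) ?_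
    rw [← det_mul, hSS, one_submatrix_mul_mul_transpose, ← isUnit_iff_isUnit_det]
    exact (hSig.submatrix Subtype.val_injective).isUnit
  have hdiff : SigT.submatrix e id - Sig.submatrix e id = B * (SigT - Sig) := by
    rw [Matrix.mul_sub, ← submatrix_id_eq_one_submatrix_mul, ← submatrix_id_eq_one_submatrix_mul]
  rw [hdiff]
  exact sqrt_dotProduct_inv_mulVec_le hSig (by convert hhigh using 1; module)
    (by convert hlow using 1; module) B (PosSemidef.sqrt_isHermitian _) hSS hdet v

/-- If (1-ε)Σ ⪯ Σ̃ ⪯ (1+ε)Σ with Σ positive definite, then for any v and A ⊆ [n],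
‖Σ_{AA}^{-1/2}(Σ̃_A - Σ_A)v‖₂ ≤ ε √(⟨v,Σv⟩). -/
theorem stmt_1 {n : ℕ} (Sig SigT : Matrix (Fin n) (Fin n) ℝ)
    (hSig : Sig.PosDef) (hSigT : SigT.IsSymm) (ε : ℝ)
    (hlow : (SigT - (1 - ε) • Sig).PosSemidef)
    (hhigh : ((1 + ε) • Sig - SigT).PosSemidef)
    (v : Fin n → ℝ) (A : Finset (Fin n)) :
    (fun d => Real.sqrt (d ⬝ᵥ d))
      ((((hSig.posSemidef.submatrix (Subtype.val : {i // i ∈ A} → Fin n)).sqrt)⁻¹).mulVec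
        (((SigT.submatrix (Subtype.val : {i // i ∈ A} → Fin n) id)
          - (Sig.submatrix (Subtype.val : {i // i ∈ A} → Fin n) id)).mulVec v))
      ≤ ε * Real.sqrt (v ⬝ᵥ Sig.mulVec v) :=
  stmt_1_general Sig SigT hSig ε hlow hhigh v A
end

section
/- Let M = [[A, B],[Bᵀ, C]] be a symmetric positive definite n×n block matrix with A a square principal block. Then the smallest eigenvalue of M satisfies λ_min(M) ≥ min( λ_min(A)/8 , λ_min(M/A) / (1 + 4·λ_min(A)^{−2}·‖B‖_op²) ), where M/A = C − Bᵀ A^{−1} B is the Schur complement of A in M. -/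
open Matrix

/-- Smallest eigenvalue of a Hermitian real matrix. -/
noncomputable def lamMin {ι : Type*} [Fintype ι] [DecidableEq ι]
    (A : Matrix ι ι ℝ) (hA : A.IsHermitian) : ℝ :=
  ⨅ i, hA.eigenvalues i

/-- The ℓ²→ℓ² operator norm of a real matrix. -/
noncomputable def opNorm {m n : Type*} [Fintype m] [Fintype n] [DecidableEq n]
    (B : Matrix m n ℝ) : ℝ :=
  ‖LinearMap.toContinuousLinearMap (Matrix.toEuclideanLin B)‖

/-! Write `z = (x, y)` and complete the square:
`zᵀ M z = uᵀ A u + yᵀ (M/A) y` with `u = x + A⁻¹ B y`, so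
`zᵀ M z ≥ λ_min(A) |u|² + λ_min(M/A) |y|²`.
Since `x = u - A⁻¹ B y` and `|A⁻¹ B y| ≤ ‖B‖ |y| / λ_min(A)`, we have
`|x|² ≤ 2 |u|² + 2 ‖B‖² λ_min(A)⁻² |y|²`. For `0 < c` with `c ≤ λ_min(A) / 8` and
`c (1 + 4 ‖B‖² λ_min(A)⁻²) ≤ λ_min(M/A)` this gives `c |z|² ≤ zᵀ M z`, i.e. `c ≤ λ_min(M)`. -/

section DotProduct

variable {m n : Type*} [Fintype m] [Fintype n]

theorem dotProduct_self_nonneg (x : n → ℝ) : 0 ≤ x ⬝ᵥ x := by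
  simpa using dotProduct_self_star_nonneg x

theorem norm_toLp_two_sq (x : n → ℝ) : ‖WithLp.toLp 2 x‖ ^ 2 = x ⬝ᵥ x := by
  rw [EuclideanSpace.real_norm_sq_eq]
  simp [dotProduct, sq]

theorem mulVec_dotProduct_self_le_opNorm_sq [DecidableEq n] (B : Matrix m n ℝ) (x : n → ℝ) :
    (B *ᵥ x) ⬝ᵥ (B *ᵥ x) ≤ opNorm B ^ 2 * (x ⬝ᵥ x) := by
  rw [← norm_toLp_two_sq, ← norm_toLp_two_sq, ← mul_pow]
  exact pow_le_pow_left₀ (norm_nonneg _)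
    ((LinearMap.toContinuousLinearMap (toEuclideanLin B)).le_opNorm (WithLp.toLp 2 x)) 2

theorem sub_dotProduct_sub_self_le (u v : n → ℝ) :
    (u - v) ⬝ᵥ (u - v) ≤ 2 * (u ⬝ᵥ u) + 2 * (v ⬝ᵥ v) := by
  have := dotProduct_self_nonneg (u + v)
  simp only [add_dotProduct, dotProduct_add, sub_dotProduct, dotProduct_sub,
    dotProduct_comm v u] at *
  linarith

theorem sq_mul_dotProduct_self_le {a : ℝ} (ha : 0 ≤ a) {z w : n → ℝ}
    (h : a * (z ⬝ᵥ z) ≤ z ⬝ᵥ w) : a ^ 2 * (z ⬝ᵥ z) ≤ w ⬝ᵥ w := by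
  have := dotProduct_self_nonneg (w - a • z)
  simp only [sub_dotProduct, dotProduct_sub, smul_dotProduct, dotProduct_smul, smul_eq_mul,
    dotProduct_comm w z] at this
  nlinarith

end DotProduct

section Rayleigh

variable {n : Type*} [Fintype n] [DecidableEq n] {S : Matrix n n ℝ}

theorem posSemidef_sub_smul_one_iff_le_eigenvalues (hS : S.IsHermitian) (c : ℝ) :
    (S - c • 1).PosSemidef ↔ ∀ i, c ≤ hS.eigenvalues i := by
  have hSc : (S - c • 1).IsHermitian := hS.sub (isHermitian_one.smul (IsSelfAdjoint.all c))
  rw [posSemidef_iff_isHermitian_and_spectrum_nonneg, and_iff_right hSc,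
    ← Algebra.algebraMap_eq_smul_one, ← spectrum.sub_singleton_eq,
    hS.spectrum_real_eq_range_eigenvalues]
  simp only [Set.sub_singleton, Set.image_subset_iff, Set.range_subset_iff, Set.mem_preimage,
    Set.mem_ofPred_eq, sub_nonneg]

theorem dotProduct_sub_smul_one_mulVec (c : ℝ) (x : n → ℝ) :
    star x ⬝ᵥ (S - c • 1) *ᵥ x = x ⬝ᵥ S *ᵥ x - c * (x ⬝ᵥ x) := by
  simp [sub_mulVec, dotProduct_sub, smul_mulVec]

theorem posSemidef_sub_smul_one_iff_forall_dotProduct (hS : S.IsHermitian) (c : ℝ) :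
    (S - c • 1).PosSemidef ↔ ∀ x, c * (x ⬝ᵥ x) ≤ x ⬝ᵥ S *ᵥ x := by
  have hSc : (S - c • 1).IsHermitian := hS.sub (isHermitian_one.smul (IsSelfAdjoint.all c))
  refine ⟨fun h x => ?_, fun h => .of_dotProduct_mulVec_nonneg hSc fun x => ?_⟩
  · have := h.dotProduct_mulVec_nonneg x
    rw [dotProduct_sub_smul_one_mulVec] at this
    linarith
  · rw [dotProduct_sub_smul_one_mulVec]
    linarith [h x]

theorem lamMin_le_eigenvalues (hS : S.IsHermitian) (i : n) : lamMin S hS ≤ hS.eigenvalues i :=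
  ciInf_le (Finite.bddBelow_range _) i

theorem lamMin_mul_dotProduct_self_le (hS : S.IsHermitian) (x : n → ℝ) :
    lamMin S hS * (x ⬝ᵥ x) ≤ x ⬝ᵥ S *ᵥ x :=
  (posSemidef_sub_smul_one_iff_forall_dotProduct hS _).mp
    ((posSemidef_sub_smul_one_iff_le_eigenvalues hS _).mpr (lamMin_le_eigenvalues hS)) x

theorem le_lamMin_of_forall_dotProduct [Nonempty n] (hS : S.IsHermitian) {c : ℝ}
    (h : ∀ x, c * (x ⬝ᵥ x) ≤ x ⬝ᵥ S *ᵥ x) : c ≤ lamMin S hS :=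
  le_ciInf <| (posSemidef_sub_smul_one_iff_le_eigenvalues hS c).mp <|
    (posSemidef_sub_smul_one_iff_forall_dotProduct hS c).mpr h

theorem lamMin_nonneg (hS : S.PosSemidef) : 0 ≤ lamMin S hS.isHermitian :=
  Real.iInf_nonneg hS.eigenvalues_nonneg

theorem nonempty_of_lamMin_ne_zero (hS : S.IsHermitian) (h : lamMin S hS ≠ 0) : Nonempty n := by
  by_contra hn
  have := not_nonempty_iff.mp hn
  exact h (Real.iInf_of_isEmpty _)

theorem posDef_of_lamMin_pos (hS : S.IsHermitian) (h : 0 < lamMin S hS) : S.PosDef :=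
  hS.posDef_iff_eigenvalues_pos.mpr fun i => h.trans_le (lamMin_le_eigenvalues hS i)

theorem sq_lamMin_mul_inv_mulVec_dotProduct_self_le (hS : S.IsHermitian) (h : 0 < lamMin S hS)
    (y : n → ℝ) : lamMin S hS ^ 2 * ((S⁻¹ *ᵥ y) ⬝ᵥ (S⁻¹ *ᵥ y)) ≤ y ⬝ᵥ y := by
  have hy : S *ᵥ (S⁻¹ *ᵥ y) = y := by
    rw [mulVec_mulVec, mul_nonsing_inv _ ((isUnit_iff_isUnit_det S).mp
      (posDef_of_lamMin_pos hS h).isUnit), one_mulVec]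
  have := lamMin_mul_dotProduct_self_le hS (S⁻¹ *ᵥ y)
  rw [hy] at this
  exact sq_mul_dotProduct_self_le h.le this

end Rayleigh

section Blocks

variable {m n : Type*} [Fintype m] [DecidableEq m] [Fintype n]

theorem sumElim_dotProduct_fromBlocks_mulVec {A : Matrix m m ℝ} (B : Matrix m n ℝ)
    (C : Matrix n n ℝ) [Invertible A] (hA : A.IsHermitian) (x : m → ℝ) (y : n → ℝ) :
    Sum.elim x y ⬝ᵥ fromBlocks A B Bᵀ C *ᵥ Sum.elim x y =
      (x + A⁻¹ *ᵥ (B *ᵥ y)) ⬝ᵥ A *ᵥ (x + A⁻¹ *ᵥ (B *ᵥ y)) +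
        y ⬝ᵥ (C - Bᵀ * A⁻¹ * B) *ᵥ y := by
  simpa only [star_trivial, conjTranspose_eq_transpose_of_trivial, ← dotProduct_mulVec,
    ← mulVec_mulVec] using schur_complement_eq₁₁ B C x y hA

theorem mul_dotProduct_self_le_fromBlocks_mulVec [DecidableEq n] {A : Matrix m m ℝ}
    (B : Matrix m n ℝ) (C : Matrix n n ℝ) (hA : A.IsHermitian)
    (hS : (C - Bᵀ * A⁻¹ * B).IsHermitian) {c : ℝ}
    (hc : 0 < c) (hcA : c ≤ lamMin A hA / 8)
    (hcS : c * (1 + 4 * ((lamMin A hA) ^ 2)⁻¹ * opNorm B ^ 2) ≤ lamMin _ hS)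
    (z : m ⊕ n → ℝ) :
    c * (z ⬝ᵥ z) ≤ z ⬝ᵥ fromBlocks A B Bᵀ C *ᵥ z := by
  set a := lamMin A hA
  set b := opNorm B
  set s := lamMin _ hS
  have ha : 0 < a := by linarith
  have := (posDef_of_lamMin_pos hA ha).isUnit.invertible
  obtain ⟨x, y, rfl⟩ : ∃ x y, z = Sum.elim x y := ⟨_, _, (Sum.elim_comp_inl_inr z).symm⟩
  set v := A⁻¹ *ᵥ (B *ᵥ y)
  set u := x + v
  have hx : x ⬝ᵥ x ≤ 2 * (u ⬝ᵥ u) + 2 * (v ⬝ᵥ v) := by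
    simpa [u] using sub_dotProduct_sub_self_le u v
  have hv : v ⬝ᵥ v ≤ (a ^ 2)⁻¹ * b ^ 2 * (y ⬝ᵥ y) := by
    rw [mul_assoc, ← div_eq_inv_mul, le_div_iff₀ (by positivity), mul_comm]
    exact (sq_lamMin_mul_inv_mulVec_dotProduct_self_le hA ha _).trans
      (mulVec_dotProduct_self_le_opNorm_sq B y)
  have hvy : 0 ≤ (a ^ 2)⁻¹ * b ^ 2 * (y ⬝ᵥ y) := (dotProduct_self_nonneg v).trans hv
  rw [sumElim_dotProduct_sumElim, sumElim_dotProduct_fromBlocks_mulVec B C hA]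
  calc c * (x ⬝ᵥ x + y ⬝ᵥ y) ≤ 2 * c * (u ⬝ᵥ u) + 2 * c * (v ⬝ᵥ v) + c * (y ⬝ᵥ y) := by
        linarith [mul_le_mul_of_nonneg_left hx hc.le]
    _ ≤ a * (u ⬝ᵥ u) + c * (1 + 4 * (a ^ 2)⁻¹ * b ^ 2) * (y ⬝ᵥ y) := by
        nlinarith [mul_le_mul_of_nonneg_left hv hc.le, dotProduct_self_nonneg u]
    _ ≤ u ⬝ᵥ A *ᵥ u + s * (y ⬝ᵥ y) := by
        gcongr
        · exact lamMin_mul_dotProduct_self_le hA u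
        · exact dotProduct_self_nonneg y
    _ ≤ u ⬝ᵥ A *ᵥ u + y ⬝ᵥ (C - Bᵀ * A⁻¹ * B) *ᵥ y := by
        gcongr
        exact lamMin_mul_dotProduct_self_le hS y

end Blocks

theorem stmt_3_general {p q : ℕ}
    (A : Matrix (Fin p) (Fin p) ℝ) (B : Matrix (Fin p) (Fin q) ℝ)
    (C : Matrix (Fin q) (Fin q) ℝ)
    (hM : (Matrix.fromBlocks A B Bᵀ C).PosDef)
    (hA : A.IsHermitian) (hSchur : (C - Bᵀ * A⁻¹ * B).IsHermitian) :
    min (lamMin A hA / 8)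
      (lamMin (C - Bᵀ * A⁻¹ * B) hSchur / (1 + 4 * ((lamMin A hA)^2)⁻¹ * (opNorm B)^2))
    ≤ lamMin (Matrix.fromBlocks A B Bᵀ C) hM.isHermitian := by
  set c := min (lamMin A hA / 8)
    (lamMin (C - Bᵀ * A⁻¹ * B) hSchur / (1 + 4 * ((lamMin A hA)^2)⁻¹ * (opNorm B)^2))
  rcases le_or_gt c 0 with hc | hc
  · exact hc.trans (lamMin_nonneg hM.posSemidef)
  have hcA : c ≤ lamMin A hA / 8 := min_le_left _ _
  have hcS := (le_div_iff₀ (by positivity)).mp (min_le_right _ _ : c ≤ _)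
  -- `lamMin` of an empty matrix is `0`, so `0 < lamMin A hA` forces `p ≠ 0`.
  have : Nonempty (Fin p) := nonempty_of_lamMin_ne_zero hA (by linarith : 0 < lamMin A hA).ne'
  exact le_lamMin_of_forall_dotProduct _
    (mul_dotProduct_self_le_fromBlocks_mulVec B C hA hSchur hc hcA hcS)

/-- For a positive definite block matrix M = [[A,B],[Bᵀ,C]],
λ_min(M) ≥ min(λ_min(A)/8, λ_min(M/A)/(1 + 4 λ_min(A)⁻² ‖B‖_op²)). -/
theorem stmt_3 {p q : ℕ} (hp : 0 < p) (hq : 0 < q)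
    (A : Matrix (Fin p) (Fin p) ℝ) (B : Matrix (Fin p) (Fin q) ℝ)
    (C : Matrix (Fin q) (Fin q) ℝ)
    (hM : (Matrix.fromBlocks A B Bᵀ C).PosDef)
    (hA : A.IsHermitian) (hSchur : (C - Bᵀ * A⁻¹ * B).IsHermitian) :
    min (lamMin A hA / 8)
      (lamMin (C - Bᵀ * A⁻¹ * B) hSchur / (1 + 4 * ((lamMin A hA)^2)⁻¹ * (opNorm B)^2))
    ≤ lamMin (Matrix.fromBlocks A B Bᵀ C) hM.isHermitian :=
  stmt_3_general A B C hM hA hSchur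
end

section
/- A k-dimensional subspace V of ℝⁿ satisfies ‖x‖₁² ≤ k·‖x‖₂² for all x ∈ V if and only if V is the span of a set of k standard basis vectors. -/
/-!
Let `P` be the orthogonal projection onto `V` and `ε` a sign vector. Since
`‖Pε‖² = ⟪Pε, ε⟫ ≤ ‖Pε‖₁`, the hypothesis gives `‖Pε‖⁴ ≤ k ‖Pε‖²`, i.e. `‖Pε‖² ≤ k`.
Averaging over all `2ⁿ` sign vectors computes `trace P = k`, so `‖Pε‖² = k` for every `ε`.
Comparing the four sign vectors that differ only in two coordinates `a ≠ b` then shows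
`⟪P e_a, P e_b⟫ = 0`, so each `P e_a` is a multiple of `e_a`: every `e_a` lies in `V` or in `Vᗮ`,
and `V` is spanned by the `e_a` it contains. The converse is Cauchy–Schwarz.
-/

open Finset Module Submodule
open scoped RealInnerProductSpace

lemma eight_mul_real_inner_eq_norm_sq {F : Type*} [NormedAddCommGroup F] [InnerProductSpace ℝ F]
    (w y z : F) :
    8 * ⟪y, z⟫ = ‖w‖ ^ 2 - ‖w - (2 : ℝ) • y‖ ^ 2 - ‖w - (2 : ℝ) • z‖ ^ 2 +
      ‖w - (2 : ℝ) • y - (2 : ℝ) • z‖ ^ 2 := by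
  simp only [← real_inner_self_eq_norm_sq, inner_sub_left, inner_sub_right, real_inner_smul_left,
    real_inner_smul_right, real_inner_comm y z]
  ring

lemma OrthonormalBasis.mem_or_mem_orthogonal_of_inner_starProjection_eq_zero
    {ι 𝕜 E : Type*} [Fintype ι] [RCLike 𝕜] [NormedAddCommGroup E] [InnerProductSpace 𝕜 E]
    (b : OrthonormalBasis ι 𝕜 E) (K : Submodule 𝕜 E) [K.HasOrthogonalProjection] {a : ι}
    (h : ∀ c ≠ a, inner 𝕜 (b c) (K.starProjection (b a)) = 0) : b a ∈ K ∨ b a ∈ Kᗮ := by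
  set t := inner 𝕜 (b a) (K.starProjection (b a))
  have hP : K.starProjection (b a) = t • b a := by
    conv_lhs => rw [← b.sum_repr' (K.starProjection (b a))]
    exact sum_eq_single a (fun c _ hc => by rw [h c hc, zero_smul]) (by simp)
  by_cases ht : t = 0
  · right
    rw [← starProjection_apply_eq_zero_iff, hP, ht, zero_smul]
  · left
    have := K.smul_mem t⁻¹ (K.starProjection_apply_mem (b a))
    rwa [hP, smul_smul, inv_mul_cancel₀ ht, one_smul] at this

namespace EuclideanSpace

variable {ι : Type*}

/-- Sign vectors are indexed by the finite group `ι → ℤˣ`, so that flipping the sign of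
coordinate `a` is multiplication by `Pi.mulSingle a (-1)`. -/
noncomputable def signVector (ε : ι → ℤˣ) : EuclideanSpace ℝ ι :=
  WithLp.toLp 2 fun i => ((ε i : ℤ) : ℝ)

@[simp]
lemma signVector_apply (ε : ι → ℤˣ) (i : ι) : signVector ε i = ((ε i : ℤ) : ℝ) := rfl

lemma signVector_apply_mul_self (ε : ι → ℤˣ) (i : ι) : signVector ε i * signVector ε i = 1 := by
  rcases Int.units_eq_one_or (ε i) with h | h <;> simp [h]

lemma abs_signVector_apply (ε : ι → ℤˣ) (i : ι) : |signVector ε i| = 1 := by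
  rcases Int.units_eq_one_or (ε i) with h | h <;> simp [h]

lemma norm_starProjection_signVector_sq_le [Fintype ι] (W : Submodule ℝ (EuclideanSpace ℝ ι))
    {k : ℝ} (hk : 0 ≤ k) (h : ∀ x ∈ W, (∑ i, |x i|) ^ 2 ≤ k * ‖x‖ ^ 2) (ε : ι → ℤˣ) :
    ‖W.starProjection (signVector ε)‖ ^ 2 ≤ k := by
  set q := W.starProjection (signVector ε)
  have hq : ‖q‖ ^ 2 = ⟪q, signVector ε⟫ := by
    rw [← real_inner_self_eq_norm_sq, inner_starProjection_left_eq_right,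
      starProjection_eq_self_iff.mpr (W.starProjection_apply_mem _), real_inner_comm]
  have hq_le : ⟪q, signVector ε⟫ ≤ ∑ i, |q i| := by
    simp only [PiLp.inner_apply, RCLike.inner_apply, conj_trivial]
    refine sum_le_sum fun i _ => ?_
    calc signVector ε i * q i ≤ |signVector ε i * q i| := le_abs_self _
      _ = |q i| := by rw [abs_mul, abs_signVector_apply, one_mul]
  have hq_nonneg : 0 ≤ ‖q‖ ^ 2 := sq_nonneg _
  have := h q (W.starProjection_apply_mem _)
  nlinarith

variable [DecidableEq ι]

lemma signVector_mulSingle (a : ι) :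
    signVector (Pi.mulSingle a (-1)) = signVector 1 - (2 : ℝ) • single a 1 := by
  ext i
  by_cases h : i = a
  · subst h; norm_num
  · simp [h]

lemma signVector_mulSingle_mul_mulSingle {a b : ι} (hab : a ≠ b) :
    signVector (Pi.mulSingle a (-1) * Pi.mulSingle b (-1)) =
      signVector 1 - (2 : ℝ) • single a 1 - (2 : ℝ) • single b 1 := by
  ext i
  by_cases ha : i = a
  · subst ha; simp [hab]; norm_num
  · by_cases hb : i = b
    · subst hb; simp [ha]; norm_num
    · simp [ha, hb]

variable [Fintype ι]

lemma sum_signVector_mul_signVector (i j : ι) :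
    ∑ ε : ι → ℤˣ, signVector ε i * signVector ε j = if i = j then 2 ^ Fintype.card ι else 0 := by
  split_ifs with hij
  · subst hij
    simp only [signVector_apply_mul_self, sum_const, card_univ, Fintype.card_fun, nsmul_one]
    simp
  · -- flipping the sign of coordinate `i` permutes the sign vectors and negates each summand
    have hflip := Fintype.sum_equiv (Equiv.mulLeft (Pi.mulSingle i (-1)))
      (fun ε => signVector ε i * signVector ε j) (fun ε => -(signVector ε i * signVector ε j))
      fun ε => by simp [Ne.symm hij]
    rw [sum_neg_distrib] at hflip
    linarith

lemma sum_inner_signVector_sq (u : EuclideanSpace ℝ ι) :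
    ∑ ε : ι → ℤˣ, ⟪u, signVector ε⟫ ^ 2 = 2 ^ Fintype.card ι * ‖u‖ ^ 2 := by
  have hexpand : ∀ ε : ι → ℤˣ, ⟪u, signVector ε⟫ ^ 2 =
      ∑ i, ∑ j, u i * u j * (signVector ε i * signVector ε j) := fun ε => by
    simp only [PiLp.inner_apply, RCLike.inner_apply, conj_trivial, sq, sum_mul_sum]
    exact sum_congr rfl fun i _ => sum_congr rfl fun j _ => by ring
  simp_rw [hexpand, real_norm_sq_eq, mul_sum]
  rw [sum_comm]
  refine sum_congr rfl fun i _ => ?_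
  simp_rw [sum_comm (s := univ (α := ι → ℤˣ)), ← mul_sum, sum_signVector_mul_signVector]
  simp [sq, mul_comm]

variable (W : Submodule ℝ (EuclideanSpace ℝ ι))

lemma sum_norm_starProjection_signVector_sq :
    ∑ ε : ι → ℤˣ, ‖W.starProjection (signVector ε)‖ ^ 2 = 2 ^ Fintype.card ι * finrank ℝ W := by
  set b := stdOrthonormalBasis ℝ W
  have hparseval : ∀ x, ‖W.starProjection x‖ ^ 2 = ∑ l, ⟪(b l : EuclideanSpace ℝ ι), x⟫ ^ 2 :=
    fun x => by
      rw [starProjection_apply, ← coe_norm, ← b.sum_sq_inner_right]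
      simp_rw [inner_orthogonalProjectionOnto_eq_of_mem_left]
  simp_rw [hparseval]
  rw [sum_comm]
  simp_rw [sum_inner_signVector_sq, ← coe_norm, b.orthonormal.1]
  simp [mul_comm]

lemma norm_starProjection_signVector_sq_eq
    (h : ∀ x ∈ W, (∑ i, |x i|) ^ 2 ≤ finrank ℝ W * ‖x‖ ^ 2) (ε : ι → ℤˣ) :
    ‖W.starProjection (signVector ε)‖ ^ 2 = finrank ℝ W := by
  have hle := norm_starProjection_signVector_sq_le W (Nat.cast_nonneg _) h
  have hsum : ∑ ε : ι → ℤˣ, ‖W.starProjection (signVector ε)‖ ^ 2 =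
      ∑ _ε : ι → ℤˣ, (finrank ℝ W : ℝ) := by
    simp [sum_norm_starProjection_signVector_sq]
  exact (sum_eq_sum_iff_of_le fun ε _ => hle ε).mp hsum ε (mem_univ ε)

lemma inner_single_starProjection_single_eq_zero {c : ℝ}
    (h : ∀ ε, ‖W.starProjection (signVector ε)‖ ^ 2 = c) {a b : ι} (hba : b ≠ a) :
    ⟪single b 1, W.starProjection (single a 1)⟫ = 0 := by
  set P := W.starProjection
  have hpol := eight_mul_real_inner_eq_norm_sq (P (signVector 1)) (P (single a 1)) (P (single b 1))
  simp only [← map_smul, ← map_sub] at hpol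
  rw [← signVector_mulSingle_mul_mulSingle hba.symm, ← signVector_mulSingle,
    ← signVector_mulSingle, h, h, h, h] at hpol
  rw [← starProjection_eq_self_iff.mpr (W.starProjection_apply_mem (single a 1)),
    ← inner_starProjection_left_eq_right, real_inner_comm]
  linarith

lemma single_mem_or_mem_orthogonal_of_sq_sum_abs_le
    (h : ∀ x ∈ W, (∑ i, |x i|) ^ 2 ≤ finrank ℝ W * ‖x‖ ^ 2) (a : ι) :
    single a (1 : ℝ) ∈ W ∨ single a (1 : ℝ) ∈ Wᗮ := by
  simpa using (basisFun ι ℝ).mem_or_mem_orthogonal_of_inner_starProjection_eq_zero W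
    (a := a) fun c hc => by
      simpa using inner_single_starProjection_single_eq_zero W
        (norm_starProjection_signVector_sq_eq W h) hc

end EuclideanSpace

namespace Pi

variable {ι : Type*} [Fintype ι]

lemma sq_sum_abs_le_card_mul_sum_sq_of_mem_spanSubset {s : Finset ι} {x : ι → ℝ}
    (hx : x ∈ spanSubset ℝ (s : Set ι)) : (∑ i, |x i|) ^ 2 ≤ (s.card : ℝ) * ∑ i, x i ^ 2 := by
  rw [mem_spanSubset_iff] at hx
  have hsupp : ∑ i, |x i| = ∑ i ∈ s, |x i| :=
    (sum_subset (subset_univ s) fun i _ hi => by rw [hx i hi, abs_zero]).symm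
  calc (∑ i, |x i|) ^ 2 = (∑ i ∈ s, |x i|) ^ 2 := by rw [hsupp]
    _ ≤ (s.card : ℝ) * ∑ i ∈ s, |x i| ^ 2 := sq_sum_le_card_mul_sum_sq
    _ ≤ s.card * ∑ i, x i ^ 2 := by
      simp_rw [sq_abs]
      gcongr
      exact subset_univ s

lemma exists_eq_spanSubset_of_sq_sum_abs_le [DecidableEq ι] (V : Submodule ℝ (ι → ℝ))
    (h : ∀ x ∈ V, (∑ i, |x i|) ^ 2 ≤ finrank ℝ V * ∑ i, x i ^ 2) :
    ∃ s : Finset ι, V = spanSubset ℝ (s : Set ι) := by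
  classical
  let W : Submodule ℝ (EuclideanSpace ℝ ι) :=
    V.map (EuclideanSpace.equiv ι ℝ).toLinearEquiv.symm.toLinearMap
  have hW : ∀ x ∈ W, (∑ i, |x i|) ^ 2 ≤ finrank ℝ W * ‖x‖ ^ 2 := by
    intro x hx
    rw [LinearEquiv.finrank_map_eq, EuclideanSpace.real_norm_sq_eq]
    exact h _ ((mem_map_equiv V).mp hx)
  refine ⟨univ.filter fun i => EuclideanSpace.single i (1 : ℝ) ∈ W, ?_⟩
  ext x
  rw [mem_spanSubset_iff]
  constructor
  · intro hx i hi
    have hperp := (EuclideanSpace.single_mem_or_mem_orthogonal_of_sq_sum_abs_le W hW i).resolve_left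
      (by simpa using hi)
    simpa [EuclideanSpace.inner_single_left] using
      inner_left_of_mem_orthogonal ((mem_map_equiv V).mpr hx : WithLp.toLp 2 x ∈ W) hperp
  · intro hx
    rw [← univ_sum_single x]
    refine sum_mem fun i _ => ?_
    by_cases hi : EuclideanSpace.single i (1 : ℝ) ∈ W
    · rw [show Pi.single i (x i) = x i • Pi.single i (1 : ℝ) by simp [← Pi.single_smul]]
      exact V.smul_mem _ ((mem_map_equiv V).mp hi)
    · rw [hx i (by simpa using hi), Pi.single_zero]
      exact V.zero_mem

end Pi

/-- A k-dimensional subspace V of ℝⁿ satisfies ‖x‖₁² ≤ k‖x‖₂² for all x ∈ V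
iff V is the span of k standard basis vectors. -/
theorem stmt_10 {n k : ℕ} (V : Submodule ℝ (Fin n → ℝ))
    (hdim : Module.finrank ℝ V = k) :
    (∀ x ∈ V, (∑ i, |x i|)^2 ≤ (k : ℝ) * ∑ i, (x i)^2) ↔
      ∃ s : Finset (Fin n), s.card = k ∧
        V = Submodule.span ℝ ((fun i => (Pi.single i (1:ℝ) : Fin n → ℝ)) '' ↑s) := by
  have hspan (s : Set (Fin n)) :
      span ℝ ((fun i => (Pi.single i (1:ℝ) : Fin n → ℝ)) '' s) = Pi.spanSubset ℝ s := by
    simp [Pi.spanSubset]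
  subst hdim
  simp_rw [hspan]
  constructor
  · intro h
    obtain ⟨s, rfl⟩ := Pi.exists_eq_spanSubset_of_sq_sum_abs_le V h
    exact ⟨s, by simp, rfl⟩
  · rintro ⟨s, hcard, hV⟩ x hx
    rw [← hcard]
    exact Pi.sq_sum_abs_le_card_mul_sum_sq_of_mem_spanSubset (hV ▸ hx)
end

section
/- Let M be an m×n matrix with all entries in {0,1} whose associated bipartite graph (left vertices [n], right vertices [m], edge between i and j when M_{ji}=1) satisfies: every subset S ⊆ [n] of size at most k has neighborhood |N(S)| ≥ d(1−ε)|S|, and every left vertex has degree at most d(1+ε). Then for any k-sparse x ∈ ℝⁿ, ‖Mx‖₁ ≥ d(1−5ε)‖x‖₁. -/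
open Matrix
open scoped Classical

/-- Abel-summation auxiliary lemma: if `a` is antitone nonnegative and the
prefix sums of `r` dominate `c * t`, then `∑ r t * a t ≥ c * ∑ a t`
(with an extra slack term). -/
private lemma abel_aux (a r : ℕ → ℝ) (c : ℝ) (ha : ∀ t, a (t+1) ≤ a t)
    (ha0 : ∀ t, 0 ≤ a t) :
    ∀ s : ℕ, (∀ t ≤ s, c * t ≤ ∑ u ∈ Finset.range t, r u) →
      c * ∑ t ∈ Finset.range s, a t
        + ((∑ u ∈ Finset.range s, r u) - c * s) * a s
        ≤ ∑ t ∈ Finset.range s, r t * a t := by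
  intro s
  induction s with
  | zero => simp
  | succ s ih =>
    intro hR
    have ih' := ih (fun t ht => hR t (Nat.le_succ_of_le ht))
    have hDs1 : c * ((s : ℝ) + 1) ≤ (∑ u ∈ Finset.range s, r u) + r s := by
      have := hR (s+1) le_rfl
      rw [Finset.sum_range_succ] at this
      push_cast at this
      linarith
    rw [Finset.sum_range_succ, Finset.sum_range_succ, Finset.sum_range_succ]
    have h1 : ((∑ u ∈ Finset.range s, r u) + r s - c * ((s:ℝ)+1)) * a (s+1)
        ≤ ((∑ u ∈ Finset.range s, r u) + r s - c * ((s:ℝ)+1)) * a s := by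
      apply mul_le_mul_of_nonneg_left (ha s)
      linarith
    push_cast
    nlinarith [ih', h1]

/-- RIP-1 for expanders: if the 0/1 matrix M is the adjacency matrix of a
bipartite graph where every set S of at most k left vertices has
|N(S)| ≥ d(1-ε)|S|, and every left vertex has degree at most d(1+ε), then
‖Mx‖₁ ≥ d(1-5ε)‖x‖₁ for every k-sparse x. -/
theorem stmt_16 {m n : ℕ} (M : Matrix (Fin m) (Fin n) ℝ)
    (h01 : ∀ j i, M j i = 0 ∨ M j i = 1)
    (d ε : ℝ) (hd : 0 < d) (hε0 : 0 < ε) (hε1 : ε < 1) (k : ℕ)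
    (hexp : ∀ Sset : Finset (Fin n), Sset.card ≤ k →
      d * (1 - ε) * Sset.card
        ≤ ((Finset.univ.filter (fun y : Fin m => ∃ i ∈ Sset, M y i = 1)).card : ℝ))
    (hdeg : ∀ i : Fin n,
      ((Finset.univ.filter (fun y : Fin m => M y i = 1)).card : ℝ) ≤ d * (1 + ε))
    (x : Fin n → ℝ)
    (hx : (Finset.univ.filter (fun i => x i ≠ 0)).card ≤ k) :
    d * (1 - 5*ε) * ∑ i, |x i| ≤ ∑ j, |M.mulVec x j| := by
  classical
  set S : Finset (Fin n) := Finset.univ.filter (fun i => x i ≠ 0) with hSdef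
  -- sort the support by decreasing |x|
  set L : List (Fin n) := S.toList.mergeSort (fun i i' => decide (|x i'| ≤ |x i|))
    with hLdef
  have hperm : L.Perm S.toList := List.mergeSort_perm _ _
  have hnodupL : L.Nodup := hperm.nodup_iff.mpr S.nodup_toList
  have hmemL : ∀ i, i ∈ L ↔ i ∈ S := fun i => by
    rw [hperm.mem_iff, Finset.mem_toList]
  have hlen : L.length = S.card := by rw [hperm.length_eq, Finset.length_toList]
  have hsk : L.length ≤ k := by rw [hlen]; exact hx
  have hsorted : ∀ (u v : Fin L.length), u < v → |x (L.get v)| ≤ |x (L.get u)| := by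
    have hpw : List.Pairwise (fun a b => (decide (|x b| ≤ |x a|)) = true) L := by
      rw [hLdef]
      exact List.pairwise_mergeSort
        (fun a b c h1 h2 => by
          simp only [decide_eq_true_eq] at *
          exact le_trans h2 h1)
        (fun a b => by
          simp only [Bool.or_eq_true, decide_eq_true_eq]
          exact le_total _ _)
        S.toList
    rw [List.pairwise_iff_get] at hpw
    intro u v huv
    simpa using hpw u v huv
  -- the (sorted, padded with zeros) sequence of absolute values
  set a : ℕ → ℝ := fun t => if h : t < L.length then |x (L[t]'h)| else 0 with hadef
  have ha0 : ∀ t, 0 ≤ a t := by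
    intro t
    simp only [hadef]
    split
    · positivity
    · exact le_rfl
  have haanti : ∀ t, a (t+1) ≤ a t := by
    intro t
    by_cases h1 : t + 1 < L.length
    · have h0 : t < L.length := Nat.lt_of_succ_lt h1
      simp only [hadef, dif_pos h1, dif_pos h0]
      exact hsorted ⟨t, h0⟩ ⟨t+1, h1⟩ (by simp)
    · have hz : a (t+1) = 0 := by simp only [hadef, dif_neg h1]
      rw [hz]
      exact ha0 t
  -- the first-neighbor map
  set f : Fin m → ℕ := fun j => L.findIdx (fun i => decide (M j i = 1)) with hfdef
  set N : Finset (Fin m) := Finset.univ.filter (fun j => ∃ i ∈ S, M j i = 1) with hNdef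
  have hflt : ∀ j ∈ N, f j < L.length := by
    intro j hj
    rw [hNdef, Finset.mem_filter] at hj
    obtain ⟨-, i, hiS, hMi⟩ := hj
    exact List.findIdx_lt_length_of_exists ⟨i, (hmemL i).mpr hiS, by simp [hMi]⟩
  have hfget : ∀ j, ∀ h : f j < L.length, M j (L[f j]'h) = 1 := by
    intro j h
    have := List.findIdx_getElem (p := fun i => decide (M j i = 1)) (xs := L) (w := h)
    simpa using this
  have hfle : ∀ j, ∀ u : ℕ, ∀ h : u < L.length, M j (L[u]'h) = 1 → f j ≤ u := by
    intro j u h hM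
    by_contra hc
    push_neg at hc
    have := List.not_of_lt_findIdx (p := fun i => decide (M j i = 1)) (xs := L)
      (i := u) hc
    simp [hM] at this
  set r : ℕ → ℝ := fun t => ((N.filter (fun j => f j = t)).card : ℝ) with hrdef
  -- step A : group by fibers of f
  have hA : ∑ j ∈ N, a (f j) = ∑ t ∈ Finset.range L.length, r t * a t := by
    rw [← Finset.sum_fiberwise_of_maps_to (g := f) (t := Finset.range L.length)
      (fun j hj => Finset.mem_range.mpr (hflt j hj)) (fun j => a (f j))]
    refine Finset.sum_congr rfl fun t _ => ?_
    calc ∑ j ∈ N.filter (fun j => f j = t), a (f j)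
        = ∑ j ∈ N.filter (fun j => f j = t), a t := by
          refine Finset.sum_congr rfl fun j hj => ?_
          rw [(Finset.mem_filter.mp hj).2]
      _ = r t * a t := by rw [Finset.sum_const, nsmul_eq_mul, hrdef]
  -- per-vertex lower bound
  have hperj : ∀ j ∈ N,
      2 * a (f j) - ∑ i ∈ S.filter (fun i => M j i = 1), |x i| ≤ |M.mulVec x j| := by
    intro j hj
    have hlt := hflt j hj
    set i0 : Fin n := L[f j]'hlt with hi0
    have hMi0 : M j i0 = 1 := hfget j hlt
    have hi0S : i0 ∈ S := (hmemL i0).mp (List.getElem_mem hlt)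
    set T : Finset (Fin n) := S.filter (fun i => M j i = 1) with hTdef
    have hi0T : i0 ∈ T := Finset.mem_filter.mpr ⟨hi0S, hMi0⟩
    have hmv : M.mulVec x j = ∑ i ∈ T, x i := by
      rw [mulVec, dotProduct]
      rw [← Finset.sum_subset (Finset.subset_univ T) (fun i _ hiT => ?_)]
      · exact Finset.sum_congr rfl fun i hiT => by
          rw [(Finset.mem_filter.mp hiT).2, one_mul]
      · by_cases hiS : i ∈ S
        · have hz : M j i = 0 := by
            rcases h01 j i with h | h
            · exact h
            · exact absurd (Finset.mem_filter.mpr ⟨hiS, h⟩) hiT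
          rw [hz, zero_mul]
        · have hz : x i = 0 := by
            by_contra hxi
            exact hiS (Finset.mem_filter.mpr ⟨Finset.mem_univ i, hxi⟩)
          rw [hz, mul_zero]
    have hafj : a (f j) = |x i0| := by simp only [hadef, dif_pos hlt, hi0]
    have hsplit : ∑ i ∈ T, x i = x i0 + ∑ i ∈ T.erase i0, x i :=
      (Finset.add_sum_erase T x hi0T).symm
    have hsplit' : ∑ i ∈ T, |x i| = |x i0| + ∑ i ∈ T.erase i0, |x i| :=
      (Finset.add_sum_erase T (fun i => |x i|) hi0T).symm
    have habs : |∑ i ∈ T.erase i0, x i| ≤ ∑ i ∈ T.erase i0, |x i| :=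
      Finset.abs_sum_le_sum_abs _ _
    have hlow : |x i0| - |∑ i ∈ T.erase i0, x i| ≤ |∑ i ∈ T, x i| := by
      rw [hsplit]
      have h2 := abs_add_le (x i0 + ∑ i ∈ T.erase i0, x i) (-(∑ i ∈ T.erase i0, x i))
      simp only [add_neg_cancel_right, abs_neg] at h2
      linarith
    rw [hmv, hafj]
    linarith
  -- step B : degree bound
  have hB : ∑ j ∈ N, ∑ i ∈ S.filter (fun i => M j i = 1), |x i|
      ≤ d * (1 + ε) * ∑ i ∈ S, |x i| := by
    have hswap : ∑ j ∈ N, ∑ i ∈ S.filter (fun i => M j i = 1), |x i|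
        = ∑ i ∈ S, ((N.filter (fun j => M j i = 1)).card : ℝ) * |x i| := by
      calc ∑ j ∈ N, ∑ i ∈ S.filter (fun i => M j i = 1), |x i|
          = ∑ j ∈ N, ∑ i ∈ S, if M j i = 1 then |x i| else 0 := by
            refine Finset.sum_congr rfl fun j _ => ?_
            rw [Finset.sum_filter]
        _ = ∑ i ∈ S, ∑ j ∈ N, if M j i = 1 then |x i| else 0 := Finset.sum_comm
        _ = _ := by
            refine Finset.sum_congr rfl fun i _ => ?_
            rw [← Finset.sum_filter, Finset.sum_const, nsmul_eq_mul]
    rw [hswap, Finset.mul_sum]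
    refine Finset.sum_le_sum fun i _ => ?_
    refine mul_le_mul_of_nonneg_right ?_ (abs_nonneg _)
    refine le_trans ?_ (hdeg i)
    exact_mod_cast Finset.card_le_card
      (Finset.filter_subset_filter _ (Finset.subset_univ N))
  -- prefix sums bound via expansion
  have hpre : ∀ t ≤ L.length, d * (1 - ε) * t ≤ ∑ u ∈ Finset.range t, r u := by
    intro t ht
    set Pt : Finset (Fin n) := (L.take t).toFinset with hPt
    have hnodupT : (L.take t).Nodup := (List.take_sublist t L).nodup hnodupL
    have hcardPt : Pt.card = t := by
      rw [hPt, List.toFinset_card_of_nodup hnodupT, List.length_take]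
      exact min_eq_left ht
    have hPtk : Pt.card ≤ k := by rw [hcardPt]; exact le_trans ht hsk
    have hsub : (Finset.univ.filter (fun y : Fin m => ∃ i ∈ Pt, M y i = 1))
        ⊆ N.filter (fun j => f j < t) := by
      intro j hj
      rw [Finset.mem_filter] at hj
      obtain ⟨-, i, hiPt, hMi⟩ := hj
      rw [hPt, List.mem_toFinset] at hiPt
      obtain ⟨u, hu, hui⟩ := List.mem_iff_getElem.mp hiPt
      have hut : u < t := lt_of_lt_of_le hu (by rw [List.length_take]; exact min_le_left _ _)
      have hu' : u < L.length := lt_of_lt_of_le hu (by rw [List.length_take]; exact min_le_right _ _)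
      have hLu : L[u]'hu' = i := by rw [← hui, List.getElem_take]
      have hjN : j ∈ N := by
        rw [hNdef, Finset.mem_filter]
        exact ⟨Finset.mem_univ j, i, (hmemL i).mp (hLu ▸ List.getElem_mem hu'), hMi⟩
      refine Finset.mem_filter.mpr ⟨hjN, ?_⟩
      exact lt_of_le_of_lt (hfle j u hu' (hLu ▸ hMi)) hut
    have hfib : ∀ b ∈ Finset.range t,
        (N.filter (fun j => f j < t)).filter (fun j => f j = b)
          = N.filter (fun j => f j = b) := by
      intro b hb
      rw [Finset.filter_filter]
      refine Finset.filter_congr fun j _ => ?_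
      constructor
      · rintro ⟨-, h⟩; exact h
      · intro h; exact ⟨h ▸ Finset.mem_range.mp hb, h⟩
    have hcount : ((N.filter (fun j => f j < t)).card : ℝ)
        = ∑ u ∈ Finset.range t, r u := by
      have hcf := Finset.card_eq_sum_card_fiberwise (f := f)
        (s := N.filter (fun j => f j < t)) (t := Finset.range t)
        (fun j hj => Finset.mem_range.mpr (Finset.mem_filter.mp hj).2)
      rw [hcf]
      push_cast
      exact Finset.sum_congr rfl fun b hb => by rw [hfib b hb, hrdef]
    calc d * (1 - ε) * t = d * (1 - ε) * Pt.card := by rw [hcardPt]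
      _ ≤ ((Finset.univ.filter (fun y : Fin m => ∃ i ∈ Pt, M y i = 1)).card : ℝ) :=
          hexp Pt hPtk
      _ ≤ ((N.filter (fun j => f j < t)).card : ℝ) :=
          Nat.cast_le.mpr (Finset.card_le_card hsub)
      _ = ∑ u ∈ Finset.range t, r u := hcount
  -- sum of a equals the ℓ¹ norm of x on the support
  have hSsum : ∑ t ∈ Finset.range L.length, a t = ∑ i ∈ S, |x i| := by
    rw [← Fin.sum_univ_eq_sum_range a L.length]
    refine Finset.sum_bij (fun t _ => L.get t)
      (fun t _ => (hmemL _).mp (by simpa [List.get_eq_getElem] using List.getElem_mem t.isLt)) ?_ ?_ ?_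
    · intro t1 _ t2 _ h
      exact List.nodup_iff_injective_get.mp hnodupL h
    · intro i hiS
      obtain ⟨t, ht⟩ := List.mem_iff_get.mp ((hmemL i).mpr hiS)
      exact ⟨t, Finset.mem_univ t, ht⟩
    · intro t _
      simp only [hadef, dif_pos t.isLt, List.get_eq_getElem]
  -- Abel summation
  have habel : d * (1 - ε) * ∑ i ∈ S, |x i| ≤ ∑ j ∈ N, a (f j) := by
    have h := abel_aux a r (d * (1 - ε)) haanti ha0 L.length hpre
    have hD : 0 ≤ (∑ u ∈ Finset.range L.length, r u) - d * (1 - ε) * L.length := by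
      have := hpre L.length le_rfl; linarith
    have hslack := mul_nonneg hD (ha0 L.length)
    rw [hA, ← hSsum]
    linarith
  -- combine everything
  have hkey : ∑ j ∈ N, (2 * a (f j) - ∑ i ∈ S.filter (fun i => M j i = 1), |x i|)
      ≤ ∑ j ∈ N, |M.mulVec x j| := Finset.sum_le_sum hperj
  rw [Finset.sum_sub_distrib, ← Finset.mul_sum] at hkey
  have hNle : ∑ j ∈ N, |M.mulVec x j| ≤ ∑ j, |M.mulVec x j| :=
    Finset.sum_le_sum_of_subset_of_nonneg (Finset.subset_univ N)
      (fun j _ _ => abs_nonneg _)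
  have hxsum : ∑ i, |x i| = ∑ i ∈ S, |x i| := by
    refine (Finset.sum_subset (Finset.subset_univ S) fun i _ hiS => ?_).symm
    have hz : x i = 0 := by
      by_contra hxi
      exact hiS (Finset.mem_filter.mpr ⟨Finset.mem_univ i, hxi⟩)
    rw [hz, abs_zero]
  have hSpos : 0 ≤ ∑ i ∈ S, |x i| := Finset.sum_nonneg fun i _ => abs_nonneg _
  have hdε : 0 ≤ d * ε * ∑ i ∈ S, |x i| := by positivity
  rw [hxsum]
  linarith
end

section
/- Let A ∈ ℝ^{M×M} and k ≤ M, and suppose: (i) ‖A‖_op ≤ 3, and (ii) for all subsets S, T ⊆ [M] with |S| = M − k and |T| = k, the submatrix A_{S,T} satisfies σ_min(A_{S,T}) ≥ 1/8 — equivalently, for every k-sparse unit vector y, dist_k(Ay) ≥ 1/8 where dist_k(v) = inf over k-sparse w of ‖v − w‖₂. Then for every x ∈ ℝ^M with ‖x‖₂ = 1, dist_k of the stacked vector (x, Ax) ∈ ℝ^{2M} is at least 1/33. -/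
/-
If the unit vector x is within 1/33 of a k-sparse vector y, then ‖y‖ ≥ 32/33, and since the
sparse vectors form a cone the hypothesis on normalized sparse vectors gives
dist_k(Ay) ≥ ‖y‖/8 ≥ 4/33. As dist_k is 1-Lipschitz and ‖A‖ ≤ 3, moving from y to x costs at
most 3/33, so dist_k(Ax) ≥ 1/33. Either way one of the two blocks of (x, Ax) is 1/33-far from
the k-sparse vectors, and restricting to a block can only decrease dist_k.
-/

open Matrix
open scoped Classical

/-- Distance to the set of k-sparse vectors in the Euclidean norm. -/
noncomputable def distk {ι : Type*} [Fintype ι] (k : ℕ) (v : ι → ℝ) : ℝ :=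
  sInf ((fun w => Real.sqrt (∑ i, (v i - w i)^2)) ''
    {w : ι → ℝ | (Finset.univ.filter (fun i => w i ≠ 0)).card ≤ k})

open Metric Set
open scoped Pointwise

section Cone

variable {E F : Type*} [NormedAddCommGroup E] [NormedSpace ℝ E]
  [NormedAddCommGroup F] [NormedSpace ℝ F]

theorem le_infDist_apply_of_dist_le {S : Set E} {T : Set F}
    (hS : ∀ c : ℝ, c ≠ 0 → c • S = S) (hT : ∀ c : ℝ, c ≠ 0 → c • T = T)
    (L : E →L[ℝ] F) {a b δ : ℝ} (hL : ‖L‖ ≤ a) (hb : 0 ≤ b)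
    (hLS : ∀ y ∈ S, ‖y‖ = 1 → b ≤ infDist (L y) T)
    {x y : E} (hx : ‖x‖ = 1) (hy : y ∈ S) (hxy : dist x y ≤ δ) (hδ : δ < 1) :
    b * (1 - δ) - a * δ ≤ infDist (L x) T := by
  have hy_norm : 1 - δ ≤ ‖y‖ := by
    have := norm_le_norm_add_norm_sub' x y
    rw [← dist_eq_norm] at this
    linarith
  have hy0 : ‖y‖ ≠ 0 := by linarith
  have hu : ‖y‖⁻¹ • y ∈ S := by
    rw [← hS ‖y‖⁻¹ (inv_ne_zero hy0)]
    exact smul_mem_smul_set hy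
  have hLy : ‖y‖ * b ≤ infDist (L y) T :=
    calc ‖y‖ * b ≤ ‖y‖ * infDist (L (‖y‖⁻¹ • y)) T := by
          gcongr
          exact hLS _ hu (by rw [norm_smul, norm_inv, norm_norm, inv_mul_cancel₀ hy0])
      _ = infDist (‖y‖ • L (‖y‖⁻¹ • y)) (‖y‖ • T) := by rw [infDist_smul₀ hy0, norm_norm]
      _ = infDist (L y) T := by rw [hT _ hy0, ← map_smul, smul_inv_smul₀ hy0]
  have hLip : infDist (L y) T ≤ infDist (L x) T + a * δ :=
    calc infDist (L y) T ≤ infDist (L x) T + dist (L y) (L x) := infDist_le_infDist_add_dist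
      _ ≤ infDist (L x) T + ‖L‖ * dist y x := by gcongr; exact L.dist_le_opNorm y x
      _ ≤ infDist (L x) T + a * δ := by
        rw [dist_comm]; gcongr
        exact (norm_nonneg L).trans hL
  have hb_scaled : (1 - δ) * b ≤ ‖y‖ * b := mul_le_mul_of_nonneg_right hy_norm hb
  linarith

end Cone

section Sparse

variable {ι κ : Type*} [Fintype ι] [Fintype κ]

def sparseSet (ι : Type*) [Fintype ι] (k : ℕ) : Set (EuclideanSpace ℝ ι) :=
  {w | (Finset.univ.filter fun i => w i ≠ 0).card ≤ k}

theorem zero_mem_sparseSet (k : ℕ) : (0 : EuclideanSpace ℝ ι) ∈ sparseSet ι k := by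
  simp [sparseSet]

theorem smul_sparseSet {c : ℝ} (hc : c ≠ 0) (k : ℕ) : c • sparseSet ι k = sparseSet ι k := by
  ext w
  simp [mem_smul_set_iff_inv_smul_mem₀ hc, sparseSet, hc]

theorem distk_eq_infDist (k : ℕ) (v : ι → ℝ) :
    distk k v = infDist (WithLp.toLp 2 v) (sparseSet ι k) := by
  rw [infDist_eq_iInf, ← sInf_image', distk]
  congr 1
  ext r
  simp only [ne_eq, mem_image, mem_ofPred_eq, EuclideanSpace.dist_eq, Real.dist_eq, sq_abs,
    sparseSet]
  exact ⟨fun ⟨w, hw⟩ => ⟨WithLp.toLp 2 w, hw⟩, fun ⟨w, hw⟩ => ⟨w.ofLp, hw⟩⟩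

theorem sum_comp_le_sum_of_injective {f : κ → ι} (hf : Function.Injective f) {g : ι → ℝ}
    (hg : ∀ i, 0 ≤ g i) : ∑ j, g (f j) ≤ ∑ i, g i := by
  simpa using Finset.sum_le_univ_sum_of_nonneg (s := Finset.univ.map ⟨f, hf⟩) hg

theorem distk_comp_le {f : κ → ι} (hf : Function.Injective f) (k : ℕ) (v : ι → ℝ) :
    distk k (v ∘ f) ≤ distk k v := by
  rw [distk_eq_infDist, distk_eq_infDist]
  refine (le_infDist ⟨0, zero_mem_sparseSet k⟩).2 fun w hw => ?_
  have hwf : WithLp.toLp 2 (w.ofLp ∘ f) ∈ sparseSet κ k :=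
    (Finset.card_le_card_of_injOn f (fun j hj => by simpa using hj) hf.injOn).trans hw
  refine (infDist_le_dist_of_mem hwf).trans ?_
  simp only [EuclideanSpace.dist_eq, Real.dist_eq, sq_abs]
  exact Real.sqrt_le_sqrt <|
    sum_comp_le_sum_of_injective hf (g := fun i => (v i - w i) ^ 2) fun i => sq_nonneg _

end Sparse

theorem stmt_18_general {M : ℕ} (A : Matrix (Fin M) (Fin M) ℝ) (k : ℕ)
    (hop : opNorm A ≤ 3)
    (hsub : ∀ y : Fin M → ℝ,
      (Finset.univ.filter (fun i => y i ≠ 0)).card ≤ k →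
      ∑ i, (y i)^2 = 1 → (1/8 : ℝ) ≤ distk k (A.mulVec y)) :
    ∀ x : Fin M → ℝ, ∑ i, (x i)^2 = 1 →
      (1/33 : ℝ) ≤ distk k (Sum.elim x (A.mulVec x)) := by
  intro x hx
  set L := LinearMap.toContinuousLinearMap (Matrix.toEuclideanLin A)
  have hdistk_mulVec : ∀ y : Fin M → ℝ,
      distk k (A *ᵥ y) = infDist (L (WithLp.toLp 2 y)) (sparseSet _ k) :=
    fun y => distk_eq_infDist k _
  have hLS : ∀ y ∈ sparseSet (Fin M) k, ‖y‖ = 1 → 1 / 8 ≤ infDist (L y) (sparseSet _ k) :=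
    fun y hy hy1 => hdistk_mulVec y.ofLp ▸
      hsub y.ofLp hy (by simpa [EuclideanSpace.norm_eq] using hy1)
  have hx1 : ‖WithLp.toLp 2 x‖ = 1 := by simp [EuclideanSpace.norm_eq, hx]
  have hfar : 1 / 33 ≤ distk k x ∨ 1 / 33 ≤ distk k (A *ᵥ x) := by
    rw [or_iff_not_imp_left, not_le, distk_eq_infDist, hdistk_mulVec]
    intro hclose
    obtain ⟨y, hy, hxy⟩ := (infDist_lt_iff ⟨0, zero_mem_sparseSet k⟩).1 hclose
    have hAx := le_infDist_apply_of_dist_le (fun c hc => smul_sparseSet hc k)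
      (fun c hc => smul_sparseSet hc k) L hop (by norm_num) hLS hx1 hy hxy.le (by norm_num)
    linarith
  rcases hfar with hx_far | hAx_far
  · refine hx_far.trans ?_
    simpa only [Sum.elim_comp_inl] using distk_comp_le Sum.inl_injective k (Sum.elim x (A *ᵥ x))
  · refine hAx_far.trans ?_
    simpa only [Sum.elim_comp_inr] using distk_comp_le Sum.inr_injective k (Sum.elim x (A *ᵥ x))

/-- Uncertainty principle: if ‖A‖_op ≤ 3 and dist_k(Ay) ≥ 1/8 for every
k-sparse unit vector y, then for every unit x the stacked vector (x, Ax) is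
1/33-far from all k-sparse vectors of ℝ^{2M}. -/
theorem stmt_18 {M : ℕ} (A : Matrix (Fin M) (Fin M) ℝ) (k : ℕ) (hk : k ≤ M)
    (hop : opNorm A ≤ 3)
    (hsub : ∀ y : Fin M → ℝ,
      (Finset.univ.filter (fun i => y i ≠ 0)).card ≤ k →
      ∑ i, (y i)^2 = 1 → (1/8 : ℝ) ≤ distk k (A.mulVec y)) :
    ∀ x : Fin M → ℝ, ∑ i, (x i)^2 = 1 →
      (1/33 : ℝ) ≤ distk k (Sum.elim x (A.mulVec x)) :=
  stmt_18_general A k hop hsub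
end
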